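/- Let T be a tree whose splitters are exactly the two distinct vertices u and v. Then every vertex w lying strictly between u and v on the unique u–v path in T has the property that every neighbor of w that does not lie on this path is a leaf of T. -/

import Mathlib

open SimpleGraph

namespace TurnRegular

/-- Degree of a vertex: the cardinality of its neighbor set. -/
noncomputable def deg {V : Type*} (G : SimpleGraph V) (v : V) : ℕ :=
  (G.neighborSet v).ncard

/-- A splitter: a vertex adjacent to at least three non-leaf vertices. -/
def IsSplitter {V : Type*} (G : SimpleGraph V) (v : V) : Prop :=
  3 ≤ {u | G.Adj v u ∧ 2 ≤ deg G u}.ncard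

/-- A `k`-fork: a vertex of degree exactly `k+1` adjacent to at least `k` leaves. -/
def IsKFork {V : Type*} (k : ℕ) (G : SimpleGraph V) (v : V) : Prop :=
  deg G v = k + 1 ∧ k ≤ {u | G.Adj v u ∧ deg G u = 1}.ncard

/-- A `k`-caterpillar: a tree with at least three vertices whose non-leaf vertices
form the vertex set of a path, every non-leaf vertex having degree between `3` and `k`. -/
def IsKCaterpillar (k : ℕ) {W : Type*} (G : SimpleGraph W) : Prop :=
  G.IsTree ∧ 3 ≤ Nat.card W ∧
  (∃ (a b : W) (p : G.Walk a b), p.IsPath ∧ ∀ v, 2 ≤ deg G v ↔ v ∈ p.support) ∧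
  (∀ v, 2 ≤ deg G v → 3 ≤ deg G v ∧ deg G v ≤ k)

/-- The vertex set of the connected component of `G - v` containing `u`
(for `u ≠ v`): all vertices reachable from `u` by a walk avoiding `v`. -/
def compAway {V : Type*} (G : SimpleGraph V) (v u : V) : Set V :=
  {w | ∃ p : G.Walk u w, v ∉ p.support}

/-- Vertex set of the branch of `G` at `v` through the component of `G - v`
containing `u`. -/
def branchVerts {V : Type*} (G : SimpleGraph V) (v u : V) : Set V :=
  insert v (compAway G v u)

/-- The branch of `G` at `v` through the component of `G - v` containing `u`:
the subgraph induced on `{v} ∪ C`. -/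
def branch {V : Type*} (G : SimpleGraph V) (v u : V) :
    SimpleGraph (branchVerts G v u) :=
  G.induce (branchVerts G v u)

/-- A 4-windmill: a tree of maximum degree at most 4 with exactly one splitter `v`,
such that `v` has degree 4 and each of the four branches at `v` is a 3-caterpillar. -/
def Is4Windmill {V : Type*} (G : SimpleGraph V) : Prop :=
  G.IsTree ∧ (∀ w, deg G w ≤ 4) ∧
  ∃ v, (∀ w, IsSplitter G w ↔ w = v) ∧ deg G v = 4 ∧
    ∀ u, G.Adj v u → IsKCaterpillar 3 (branch G v u)

/-- A 3-windmill: a tree of maximum degree at most 4 with exactly one splitter `v`,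
such that `v` has exactly three non-leaf neighbors, every other neighbor of `v`
is a leaf, and among the three branches at `v` through the components containing
the non-leaf neighbors, two are 3-caterpillars and one is a 4-caterpillar. -/
def Is3Windmill {V : Type*} (G : SimpleGraph V) : Prop :=
  G.IsTree ∧ (∀ w, deg G w ≤ 4) ∧
  ∃ v, (∀ w, IsSplitter G w ↔ w = v) ∧
    ∃ u₁ u₂ u₃, u₁ ≠ u₂ ∧ u₁ ≠ u₃ ∧ u₂ ≠ u₃ ∧
      G.Adj v u₁ ∧ G.Adj v u₂ ∧ G.Adj v u₃ ∧
      2 ≤ deg G u₁ ∧ 2 ≤ deg G u₂ ∧ 2 ≤ deg G u₃ ∧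
      (∀ u, G.Adj v u → 2 ≤ deg G u → u = u₁ ∨ u = u₂ ∨ u = u₃) ∧
      (∀ u, G.Adj v u → u ≠ u₁ → u ≠ u₂ → u ≠ u₃ → deg G u = 1) ∧
      IsKCaterpillar 3 (branch G v u₁) ∧ IsKCaterpillar 3 (branch G v u₂) ∧
      IsKCaterpillar 4 (branch G v u₃)

/-- A double-windmill: a tree of maximum degree at most 4 with exactly two
splitters `u` and `v` such that (i) every vertex strictly between `u` and `v`
on the `u`–`v` path is adjacent, apart from its neighbors on the path, only
to leaves; (ii) each of `u` and `v` has exactly three non-leaf neighbors and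
every other neighbor is a leaf; (iii) for each of `u` and `v`, the two branches
at it through the components that contain one of its non-leaf neighbors but not
the other splitter are 3-caterpillars. -/
def IsDoubleWindmill {V : Type*} (G : SimpleGraph V) : Prop :=
  G.IsTree ∧ (∀ w, deg G w ≤ 4) ∧
  ∃ u v, u ≠ v ∧ (∀ w, IsSplitter G w ↔ (w = u ∨ w = v)) ∧
    (∀ p : G.Walk u v, p.IsPath →
      ∀ w ∈ p.support, w ≠ u → w ≠ v →
        ∀ x, G.Adj w x → x ∉ p.support → deg G x = 1) ∧
    {x | G.Adj u x ∧ 2 ≤ deg G x}.ncard = 3 ∧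
    {x | G.Adj v x ∧ 2 ≤ deg G x}.ncard = 3 ∧
    (∀ x, G.Adj u x → deg G x = 1 ∨ 2 ≤ deg G x) ∧
    (∀ x, G.Adj v x → deg G x = 1 ∨ 2 ≤ deg G x) ∧
    (∀ x, G.Adj u x → 2 ≤ deg G x → v ∉ branchVerts G u x →
      IsKCaterpillar 3 (branch G u x)) ∧
    (∀ x, G.Adj v x → 2 ≤ deg G x → u ∉ branchVerts G v x →
      IsKCaterpillar 3 (branch G v x))

/-- The closed axis-parallel ray starting at `p` and passing through `q`
(extended to infinity beyond `q`). -/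
def ray (p q : ℝ × ℝ) : Set (ℝ × ℝ) :=
  {x | ∃ t : ℝ, 0 ≤ t ∧ x = p + t • (q - p)}

/-- A rectilinear planar drawing of `G`: an injective placement of the vertices
in the plane such that each edge is a horizontal or vertical segment, and the
segments of two distinct edges meet at most in the image of a common endpoint. -/
def IsRectDrawing {V : Type*} (G : SimpleGraph V) (Γ : V → ℝ × ℝ) : Prop :=
  Function.Injective Γ ∧
  (∀ u v, G.Adj u v → (Γ u).1 = (Γ v).1 ∨ (Γ u).2 = (Γ v).2) ∧
  (∀ u v x y, G.Adj u v → G.Adj x y → s(u, v) ≠ s(x, y) →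
    ∀ p ∈ segment ℝ (Γ u) (Γ v) ∩ segment ℝ (Γ x) (Γ y),
      ∃ w, (w = u ∨ w = v) ∧ (w = x ∨ w = y) ∧ p = Γ w)

/-- The drawn point set of edge `{a, b}` in the drawing `Γ`: its segment, where
the edge is extended beyond each leaf endpoint to an infinite axis-parallel ray. -/
noncomputable def edgeDrawn {V : Type*} (G : SimpleGraph V) (Γ : V → ℝ × ℝ)
    (a b : V) : Set (ℝ × ℝ) :=
  (if deg G b = 1 then ray (Γ a) (Γ b) else segment ℝ (Γ a) (Γ b)) ∪
  (if deg G a = 1 then ray (Γ b) (Γ a) else segment ℝ (Γ a) (Γ b))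

/-- A convex rectilinear planar drawing: a rectilinear planar drawing in which,
after extending every edge incident to a leaf beyond that leaf to an infinite
axis-parallel ray, the resulting point sets of two distinct edges still meet at
most in the image of a common endpoint. -/
def IsConvexRectDrawing {V : Type*} (G : SimpleGraph V) (Γ : V → ℝ × ℝ) : Prop :=
  IsRectDrawing G Γ ∧
  (∀ u v x y, G.Adj u v → G.Adj x y → s(u, v) ≠ s(x, y) →
    ∀ p ∈ edgeDrawn G Γ u v ∩ edgeDrawn G Γ x y,
      ∃ w, (w = u ∨ w = v) ∧ (w = x ∨ w = y) ∧ p = Γ w)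

/-- `G` admits a convex rectilinear planar drawing. -/
def HasConvexDrawing {V : Type*} (G : SimpleGraph V) : Prop :=
  ∃ Γ : V → ℝ × ℝ, IsConvexRectDrawing G Γ

/-!
Every vertex of the `u`–`v` path is a non-leaf: `u` and `v` because they are splitters, interior
vertices because they have two path neighbours. So an interior vertex `w` with a non-leaf
neighbour off the path would have three non-leaf neighbours and be a third splitter.
-/

lemma _root_.SimpleGraph.Walk.IsPath.exists_adj_adj_of_mem_support {V : Type*}
    {G : SimpleGraph V} {u v : V} {p : G.Walk u v} (hp : p.IsPath) {w : V}
    (hw : w ∈ p.support) (hwu : w ≠ u) (hwv : w ≠ v) :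
    ∃ a b, a ≠ b ∧ G.Adj w a ∧ G.Adj w b ∧ a ∈ p.support ∧ b ∈ p.support := by
  classical
  obtain ⟨a, hwa, q, hq⟩ := Walk.not_nil_iff.mp
    (Walk.not_nil_of_ne hwu (p := (p.takeUntil w hw).reverse))
  obtain ⟨b, hwb, r, hr⟩ := Walk.not_nil_iff.mp
    (Walk.not_nil_of_ne hwv (p := p.dropUntil w hw))
  have hsupp : p.support = (p.takeUntil w hw).support ++ (p.dropUntil w hw).support.tail := by
    conv_lhs => rw [← p.take_spec hw]
    exact Walk.support_append _ _
  have ha : a ∈ (p.takeUntil w hw).support := by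
    rw [← List.mem_reverse, ← Walk.support_reverse, hq]
    simp
  have hb : b ∈ (p.dropUntil w hw).support.tail := by
    rw [hr]; simp
  have hdisj := (List.nodup_append'.mp (hsupp ▸ hp.support_nodup)).2.2
  refine ⟨a, b, fun h => hdisj ha (h ▸ hb), hwa, hwb, ?_, ?_⟩
  · rw [hsupp]; exact List.mem_append_left _ ha
  · rw [hsupp]; exact List.mem_append_right _ hb

section

variable {V : Type*} [Finite V] {G : SimpleGraph V}

lemma two_le_deg_of_adj_of_adj {w a b : V} (hab : a ≠ b) (ha : G.Adj w a) (hb : G.Adj w b) :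
    2 ≤ deg G w :=
  (Set.one_lt_ncard_iff (Set.toFinite _)).mpr ⟨a, b, ha, hb, hab⟩

lemma two_le_deg_of_adj_of_ne_one {w x : V} (hwx : G.Adj w x) (hx : deg G x ≠ 1) :
    2 ≤ deg G x := by
  have : 0 < deg G x := (Set.ncard_pos (Set.toFinite _)).mpr ⟨w, hwx.symm⟩
  omega

lemma IsSplitter.two_le_deg {w : V} (h : IsSplitter G w) : 2 ≤ deg G w :=
  calc 2 ≤ 3 := by norm_num
    _ ≤ _ := h
    _ ≤ deg G w := Set.ncard_le_ncard (fun _ hy => hy.1) (Set.toFinite _)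

lemma isSplitter_of_adj {w a b c : V} (hab : a ≠ b) (hac : a ≠ c) (hbc : b ≠ c)
    (ha : G.Adj w a) (hb : G.Adj w b) (hc : G.Adj w c)
    (ha2 : 2 ≤ deg G a) (hb2 : 2 ≤ deg G b) (hc2 : 2 ≤ deg G c) : IsSplitter G w :=
  (Set.two_lt_ncard_iff (Set.toFinite _)).mpr
    ⟨a, b, c, ⟨ha, ha2⟩, ⟨hb, hb2⟩, ⟨hc, hc2⟩, hab, hac, hbc⟩

lemma two_le_deg_of_mem_support {u v : V} {p : G.Walk u v} (hp : p.IsPath)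
    (hu : 2 ≤ deg G u) (hv : 2 ≤ deg G v) {y : V} (hy : y ∈ p.support) : 2 ≤ deg G y := by
  obtain rfl | hyu := eq_or_ne y u
  · exact hu
  obtain rfl | hyv := eq_or_ne y v
  · exact hv
  obtain ⟨a, b, hab, ha, hb, -, -⟩ := hp.exists_adj_adj_of_mem_support hy hyu hyv
  exact two_le_deg_of_adj_of_adj hab ha hb

end

theorem stmt12_general {V : Type*} [Fintype V] (G : SimpleGraph V) (u v : V)
    (hsplit : ∀ w, IsSplitter G w ↔ (w = u ∨ w = v)) :
    ∀ p : G.Walk u v, p.IsPath →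
      ∀ w ∈ p.support, w ≠ u → w ≠ v →
        ∀ x, G.Adj w x → x ∉ p.support → deg G x = 1 := by
  intro p hp w hw hwu hwv x hwx hxp
  by_contra hx
  have hdeg : ∀ y ∈ p.support, 2 ≤ deg G y := fun y hy =>
    two_le_deg_of_mem_support hp ((hsplit u).mpr (.inl rfl)).two_le_deg
      ((hsplit v).mpr (.inr rfl)).two_le_deg hy
  obtain ⟨a, b, hab, hwa, hwb, ha, hb⟩ := hp.exists_adj_adj_of_mem_support hw hwu hwv
  have hw_split : IsSplitter G w :=
    isSplitter_of_adj hab (by rintro rfl; exact hxp ha) (by rintro rfl; exact hxp hb) hwa hwb hwx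
      (hdeg a ha) (hdeg b hb) (two_le_deg_of_adj_of_ne_one hwx hx)
  exact ((hsplit w).mp hw_split).elim hwu hwv

/-- Let `T` be a tree whose splitters are exactly the two distinct vertices `u`
and `v`. Then every vertex `w` lying strictly between `u` and `v` on the unique
`u`–`v` path in `T` has the property that every neighbor of `w` not lying on
this path is a leaf of `T`. -/
theorem stmt12 {V : Type*} [Fintype V] (G : SimpleGraph V)
    (htree : G.IsTree) (u v : V) (huv : u ≠ v)
    (hsplit : ∀ w, IsSplitter G w ↔ (w = u ∨ w = v)) :
    ∀ p : G.Walk u v, p.IsPath →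
      ∀ w ∈ p.support, w ≠ u → w ≠ v →
        ∀ x, G.Adj w x → x ∉ p.support → deg G x = 1 :=
  stmt12_general G u v hsplit

end TurnRegular
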